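/- arXiv:2510.16613 — 4 statements merged into one kernel-verified Lean document; each statement's English description precedes it below -/
import Mathlib

section
/- Suppose (p, e) solves p' = -e - F(θ)·p², e' = (1-e)·p·F(θ) along a characteristic (where F(θ) = (1+P(θ)²)^{-3/2}), and suppose (p̄, q) solves the linear system p̄' = -(q + e₀ - 1), q' = p̄·F(θ) with p̄(0) = p(0), q(0) = 1, e(0) = e₀. Then on any interval where q does not vanish, p(θ) = p̄(θ)/q(θ) and e(θ) = ē(θ)/q(θ), where ē = q + e₀ - 1. -/
open Set Real

/-- Radon linearization for the relativistic plasma derivative (Riccati) system: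
on any interval where `q` does not vanish, `p = p̄/q` and `e = ē/q` with
`ē = q + e₀ - 1`. -/
theorem stmt6 (P E p e pbar q : ℝ → ℝ) (e₀ : ℝ) (F : ℝ → ℝ) (J : Set ℝ)
    (hJ : Convex ℝ J) (h0 : (0:ℝ) ∈ J)
    (hP : ∀ θ, HasDerivAt P (-(E θ)) θ)
    (hE : ∀ θ, HasDerivAt E (P θ / Real.sqrt (1 + (P θ)^2)) θ)
    (hF : ∀ θ, F θ = (1 + (P θ)^2) ^ (-(3/2) : ℝ))
    (hp : ∀ θ, HasDerivAt p (-(e θ) - F θ * (p θ)^2) θ)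
    (he : ∀ θ, HasDerivAt e ((1 - e θ) * p θ * F θ) θ)
    (hpbar : ∀ θ, HasDerivAt pbar (-(q θ + e₀ - 1)) θ)
    (hq : ∀ θ, HasDerivAt q (pbar θ * F θ) θ)
    (hpbar0 : pbar 0 = p 0) (hq0 : q 0 = 1) (he0 : e 0 = e₀)
    (hqne : ∀ θ ∈ J, q θ ≠ 0) :
    ∀ θ ∈ J, p θ = pbar θ / q θ ∧ e θ = (q θ + e₀ - 1) / q θ := by
  -- continuity facts
  have hPc : Continuous P := continuous_iff_continuousAt.2 fun θ => (hP θ).continuousAt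
  have hpc : Continuous p := continuous_iff_continuousAt.2 fun θ => (hp θ).continuousAt
  have hec : Continuous e := continuous_iff_continuousAt.2 fun θ => (he θ).continuousAt
  have hpbarc : Continuous pbar := continuous_iff_continuousAt.2 fun θ => (hpbar θ).continuousAt
  have hqc : Continuous q := continuous_iff_continuousAt.2 fun θ => (hq θ).continuousAt
  have hFc : Continuous F := by
    have : F = fun θ => (1 + (P θ)^2) ^ (-(3/2) : ℝ) := funext hF
    rw [this]
    exact (continuous_const.add (hPc.pow 2)).rpow_const fun x => Or.inl (by show (1 + P x ^ 2) ≠ 0; positivity)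
  -- the error functions
  set u : ℝ → ℝ × ℝ := fun t => (pbar t - p t * q t, q t + e₀ - 1 - e t * q t) with hu_def
  have huc : Continuous u :=
    (hpbarc.sub (hpc.mul hqc)).prodMk (((hqc.add continuous_const).sub continuous_const).sub (hec.mul hqc))
  have hu0 : u 0 = (0, 0) := by
    simp only [hu_def, hpbar0, hq0, he0, Prod.mk.injEq]
    constructor <;> ring
  -- key claim: u vanishes identically
  have key : ∀ θ : ℝ, u θ = (0, 0) := by
    intro θ
    set R : ℝ := |θ| + 1 with hR_def
    have hR0 : 0 < R := by positivity
    -- bound the coefficients on [-R, R]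
    obtain ⟨C, hC⟩ := (isCompact_Icc (a := -R) (b := R)).exists_bound_of_continuousOn
      (f := fun t => (F t * p t, F t * (1 - e t)))
      (((hFc.mul hpc).prodMk (hFc.mul (continuous_const.sub hec))).continuousOn)
    have hC0 : 0 ≤ C := le_trans (norm_nonneg _) (hC 0 ⟨by linarith, by linarith⟩)
    -- clamp
    set cl : ℝ → ℝ := fun t => max (-R) (min R t) with hcl_def
    have hclmem : ∀ t, cl t ∈ Icc (-R) R := fun t =>
      ⟨le_max_left _ _, max_le (by linarith) (min_le_left _ _)⟩
    have hcleq : ∀ t ∈ Icc (-R) R, cl t = t := by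
      intro t ht
      simp only [hcl_def]
      rw [min_eq_right ht.2, max_eq_right ht.1]
    have hA : ∀ t, |F (cl t) * p (cl t)| ≤ C := by
      intro t
      have := hC (cl t) (hclmem t)
      rw [Prod.norm_def] at this
      exact le_trans (le_max_left _ _) this
    have hB : ∀ t, |F (cl t) * (1 - e (cl t))| ≤ C := by
      intro t
      have := hC (cl t) (hclmem t)
      rw [Prod.norm_def] at this
      exact le_trans (le_max_right _ _) this
    -- the linear vector field
    set v : ℝ → ℝ × ℝ → ℝ × ℝ := fun t x =>
      (-(F (cl t) * p (cl t)) * x.1 - x.2, (F (cl t) * (1 - e (cl t))) * x.1) with hv_def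
    have hlip : ∀ t, LipschitzOnWith (C + 1).toNNReal (v t) univ := by
      intro t
      apply LipschitzWith.lipschitzOnWith
      apply LipschitzWith.of_dist_le_mul
      intro x y
      rw [Real.coe_toNNReal _ (by linarith)]
      rw [Prod.dist_eq, Prod.dist_eq]
      have h1 : dist x.1 y.1 ≤ max (dist x.1 y.1) (dist x.2 y.2) := le_max_left _ _
      have h2 : dist x.2 y.2 ≤ max (dist x.1 y.1) (dist x.2 y.2) := le_max_right _ _
      apply max_le
      · simp only [hv_def, Real.dist_eq] at *
        have : -(F (cl t) * p (cl t)) * x.1 - x.2 - (-(F (cl t) * p (cl t)) * y.1 - y.2)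
            = -(F (cl t) * p (cl t)) * (x.1 - y.1) - (x.2 - y.2) := by ring
        rw [this]
        calc |(-(F (cl t) * p (cl t))) * (x.1 - y.1) - (x.2 - y.2)|
            ≤ |(-(F (cl t) * p (cl t))) * (x.1 - y.1)| + |x.2 - y.2| := abs_sub _ _
          _ = |F (cl t) * p (cl t)| * |x.1 - y.1| + |x.2 - y.2| := by
              rw [abs_mul, abs_neg]
          _ ≤ C * max |x.1 - y.1| |x.2 - y.2| + max |x.1 - y.1| |x.2 - y.2| := by
              gcongr <;>
                first | exact hA t | exact le_max_left _ _ | exact le_max_right _ _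
          _ = (C + 1) * max |x.1 - y.1| |x.2 - y.2| := by ring
      · simp only [hv_def, Real.dist_eq] at *
        have : F (cl t) * (1 - e (cl t)) * x.1 - F (cl t) * (1 - e (cl t)) * y.1
            = F (cl t) * (1 - e (cl t)) * (x.1 - y.1) := by ring
        rw [this, abs_mul]
        calc |F (cl t) * (1 - e (cl t))| * |x.1 - y.1|
            ≤ C * max |x.1 - y.1| |x.2 - y.2| := by
              gcongr <;>
                first | exact hB t | exact le_max_left _ _
          _ ≤ (C + 1) * max |x.1 - y.1| |x.2 - y.2| := by nlinarith [le_max_left |x.1 - y.1| |x.2 - y.2|, abs_nonneg (x.1 - y.1), abs_nonneg (x.2 - y.2)]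
    -- u solves the ODE on the open interval
    have hu' : ∀ t ∈ Ioo (-R) R, HasDerivAt u (v t (u t)) t := by
      intro t ht
      have hclt : cl t = t := hcleq t ⟨ht.1.le, ht.2.le⟩
      have h1 : HasDerivAt (fun s => pbar s - p s * q s)
          (-(q t + e₀ - 1) - ((-(e t) - F t * (p t)^2) * q t + p t * (pbar t * F t))) t :=
        (hpbar t).sub ((hp t).mul (hq t))
      have h2 : HasDerivAt (fun s => q s + e₀ - 1 - e s * q s)
          (pbar t * F t - ((1 - e t) * p t * F t * q t + e t * (pbar t * F t))) t :=
        (((hq t).add_const e₀).sub_const 1).sub ((he t).mul (hq t))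
      have := h1.prodMk h2
      convert this using 1
      simp only [hv_def, hu_def, hclt, Prod.mk.injEq]
      constructor <;> ring
    -- the zero function solves the same ODE
    have hz' : ∀ t ∈ Ioo (-R) R, HasDerivAt (fun _ : ℝ => ((0, 0) : ℝ × ℝ)) (v t (0, 0)) t := by
      intro t ht
      have : v t ((0, 0) : ℝ × ℝ) = (0, 0) := by
        simp [hv_def]
      rw [this]
      exact hasDerivAt_const t _
    -- uniqueness
    have h0mem : (0 : ℝ) ∈ Ioo (-R) R := ⟨by linarith, by linarith⟩
    have heq := ODE_solution_unique_of_mem_Icc (s := fun _ => (univ : Set (ℝ × ℝ))) (fun t _ => hlip t) h0mem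
      huc.continuousOn hu' (fun _ _ => mem_univ _)
      continuousOn_const hz' (fun _ _ => mem_univ _) (by rw [hu0])
    have hθmem : θ ∈ Icc (-R) R := by
      constructor
      · have := neg_abs_le θ; linarith
      · have := le_abs_self θ; linarith
    exact heq hθmem
  -- conclude
  intro θ hθ
  have hu := key θ
  have hqθ := hqne θ hθ
  have h1 : pbar θ - p θ * q θ = 0 := congrArg Prod.fst hu
  have h2 : q θ + e₀ - 1 - e θ * q θ = 0 := congrArg Prod.snd hu
  constructor
  · field_simp
    linarith
  · field_simp
    linarith
end

section
/- Chaplygin comparison for the phase curves: let 0 < K₋ ≤ K(θ) ≤ K₊ and let p̄(q) solve dp̄/dq = (-q+1-e₀)/(K(θ(q))·p̄) in the region p̄ < 0, q decreasing, with initial point (q*, p*), p* < 0. Then for q ≤ q* in this region, the solution satisfies p̄₊(q) ≤ p̄(q) ≤ p̄₋(q), where p̄± are the solutions of the same equation with K replaced by the constants K±, same initial data. (Equivalently, the integral curve lies between the two bounding ellipses.) -/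
/-!
Along a solution, `(p̄²)' = 2(1 - e₀ - q) / K(q)`, while along the comparison ellipse with constant
`K±` the same quantity has derivative `2(1 - e₀ - q) / K±`. In the region `q ≤ 1 - e₀` the numerator
is nonnegative, so `K₋ ≤ K ≤ K₊` orders the three derivatives. All three curves start at `(q*, p*)`
and are followed for decreasing `q`, hence `p̄₋² ≤ p̄² ≤ p̄₊²`, and taking negative square roots gives
the claim.
-/

open Set

/-- `p̄²` on the comparison ellipse `K p̄² + q² - 2(1-e₀)q = K p*² + q*² - 2(1-e₀)q*`. -/
noncomputable def ellipseSq (K e₀ qs ps q : ℝ) : ℝ :=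
  ps ^ 2 + (qs ^ 2 - q ^ 2 - 2 * (1 - e₀) * (qs - q)) / K

theorem hasDerivAt_ellipseSq (K e₀ qs ps q : ℝ) :
    HasDerivAt (ellipseSq K e₀ qs ps) (2 * (1 - e₀ - q) / K) q := by
  have h := ((((hasDerivAt_pow 2 q).const_sub (qs ^ 2)).sub
    (((hasDerivAt_id' q).const_sub qs).const_mul (2 * (1 - e₀)))).div_const K).const_add (ps ^ 2)
  exact h.congr_deriv (by ring)

theorem ellipseSq_self (K e₀ qs ps : ℝ) : ellipseSq K e₀ qs ps qs = ps ^ 2 := by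
  simp [ellipseSq]

theorem HasDerivWithinAt.sq_of_eq_div_mul {p : ℝ → ℝ} {s : Set ℝ} {x c κ : ℝ}
    (h : HasDerivWithinAt p (c / (κ * p x)) s x) (hp : p x ≠ 0) :
    HasDerivWithinAt (fun y => p y ^ 2) (2 * c / κ) s x := by
  refine (h.pow 2).congr_deriv ?_
  field_simp
  ring

theorem le_of_hasDerivWithinAt_le_of_eq_right {f g f' g' : ℝ → ℝ} {a b : ℝ}
    (hf : ∀ x ∈ Icc a b, HasDerivWithinAt f (f' x) (Icc a b) x)
    (hg : ∀ x ∈ Icc a b, HasDerivWithinAt g (g' x) (Icc a b) x)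
    (hle : ∀ x ∈ Ioo a b, f' x ≤ g' x) (hb : f b = g b) :
    ∀ x ∈ Icc a b, g x ≤ f x := by
  have hmono : MonotoneOn (fun y => g y - f y) (Icc a b) := by
    apply monotoneOn_of_hasDerivWithinAt_nonneg (convex_Icc a b) (f' := fun x => g' x - f' x)
    · exact fun x hx => ((hg x hx).sub (hf x hx)).continuousWithinAt
    · rw [interior_Icc]
      exact fun x hx => ((hg x (Ioo_subset_Icc_self hx)).sub
        (hf x (Ioo_subset_Icc_self hx))).mono Ioo_subset_Icc_self
    · rw [interior_Icc]
      exact fun x hx => sub_nonneg.mpr (hle x hx)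
  intro x hx
  have := hmono hx (right_mem_Icc.mpr (hx.1.trans hx.2)) hx.2
  simp only [hb, sub_self] at this
  linarith

theorem sq_mem_Icc_ellipseSq {Kminus Kplus e₀ a qs : ℝ} {k p : ℝ → ℝ} (hKm : 0 < Kminus) (hk : ∀ x, Kminus ≤ k x ∧ k x ≤ Kplus)
    (hreg : ∀ x ∈ Icc a qs, x ≤ 1 - e₀) (hneg : ∀ x ∈ Icc a qs, p x < 0)
    (hp : ∀ x ∈ Icc a qs, HasDerivWithinAt p ((-x + 1 - e₀) / (k x * p x)) (Icc a qs) x) :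
    ∀ x ∈ Icc a qs,
      p x ^ 2 ∈ Icc (ellipseSq Kminus e₀ qs (p qs) x) (ellipseSq Kplus e₀ qs (p qs) x) := by
  have hpos : ∀ x, 0 < k x := fun x => hKm.trans_le (hk x).1
  have hsq : ∀ x ∈ Icc a qs,
      HasDerivWithinAt (fun y => p y ^ 2) (2 * (1 - e₀ - x) / k x) (Icc a qs) x := fun x hx =>
    ((hp x hx).sq_of_eq_div_mul (hneg x hx).ne).congr_deriv (by ring)
  have hell : ∀ K, ∀ x ∈ Icc a qs, HasDerivWithinAt (ellipseSq K e₀ qs (p qs))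
      (2 * (1 - e₀ - x) / K) (Icc a qs) x := fun K x _ =>
    (hasDerivAt_ellipseSq K e₀ qs (p qs) x).hasDerivWithinAt
  have hnum : ∀ x ∈ Ioo a qs, 0 ≤ 2 * (1 - e₀ - x) := fun x hx => by
    linarith [hreg x (Ioo_subset_Icc_self hx)]
  intro x hx
  constructor
  · refine le_of_hasDerivWithinAt_le_of_eq_right hsq (hell Kminus) (fun y hy => ?_)
      (ellipseSq_self ..).symm x hx
    exact div_le_div_of_nonneg_left (hnum y hy) hKm (hk y).1
  · refine le_of_hasDerivWithinAt_le_of_eq_right (hell Kplus) hsq (fun y hy => ?_)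
      (ellipseSq_self ..) x hx
    exact div_le_div_of_nonneg_left (hnum y hy) (hpos y) (hk y).2

theorem stmt9_general (Kminus Kplus e₀ a qs ps : ℝ) (k p : ℝ → ℝ)
    (hKm : 0 < Kminus) (hk : ∀ x, Kminus ≤ k x ∧ k x ≤ Kplus)
    (hinit : p qs = ps)
    (hreg : ∀ x ∈ Set.Icc a qs, x ≤ 1 - e₀)
    (hneg : ∀ x ∈ Set.Icc a qs, p x < 0)
    (hp : ∀ x ∈ Set.Icc a qs,
      HasDerivWithinAt p ((-x + 1 - e₀) / (k x * p x)) (Set.Icc a qs) x) :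
    ∀ x ∈ Set.Icc a qs,
      -Real.sqrt (ps^2 + (qs^2 - x^2 - 2*(1-e₀)*(qs - x)) / Kplus) ≤ p x ∧
      p x ≤ -Real.sqrt (ps^2 + (qs^2 - x^2 - 2*(1-e₀)*(qs - x)) / Kminus) := by
  intro x hx
  obtain ⟨hlower, hupper⟩ := sq_mem_Icc_ellipseSq hKm hk hreg hneg hp x hx
  rw [hinit] at hlower hupper
  refine ⟨Real.neg_sqrt_le_of_sq_le hupper, le_neg_of_le_neg ?_⟩
  exact (Real.sqrt_le_left (neg_nonneg.mpr (hneg x hx).le)).mpr (by rwa [neg_sq])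

/-- Chaplygin comparison for the phase curves: in the region `p̄ < 0`,
`q ≤ 1 - e₀`, the integral curve of `dp̄/dq = (-q+1-e₀)/(k(q) p̄)` with
`K₋ ≤ k ≤ K₊` lies between the two bounding ellipses: `p̄₊(q) ≤ p̄(q) ≤ p̄₋(q)`. -/
theorem stmt9 (Kminus Kplus e₀ a qs ps : ℝ) (k p : ℝ → ℝ)
    (hKm : 0 < Kminus) (hk : ∀ x, Kminus ≤ k x ∧ k x ≤ Kplus)
    (ha : a ≤ qs) (hps : ps < 0) (hinit : p qs = ps)
    (hreg : ∀ x ∈ Set.Icc a qs, x ≤ 1 - e₀)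
    (hneg : ∀ x ∈ Set.Icc a qs, p x < 0)
    (hp : ∀ x ∈ Set.Icc a qs,
      HasDerivWithinAt p ((-x + 1 - e₀) / (k x * p x)) (Set.Icc a qs) x) :
    ∀ x ∈ Set.Icc a qs,
      -Real.sqrt (ps^2 + (qs^2 - x^2 - 2*(1-e₀)*(qs - x)) / Kplus) ≤ p x ∧
      p x ≤ -Real.sqrt (ps^2 + (qs^2 - x^2 - 2*(1-e₀)*(qs - x)) / Kminus) :=
  stmt9_general Kminus Kplus e₀ a qs ps k p hKm hk hinit hreg hneg hp
end

section
/- If 0 < K₋ < 1 and the condition K₋^{n-1}(1-e₀)² - e₀²/K₋ - p₀² > 0 holds, then also p₀² + 2e₀ - 1 < 0 (the relativistic sufficient condition is more stringent than the non-relativistic criterion). -/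
theorem stmt14_general (Kminus e₀ p₀ : ℝ) (n : ℕ)
    (hK0 : 0 < Kminus) (hK1 : Kminus < 1)
    (h : 0 < Kminus^(n-1)*(1-e₀)^2 - e₀^2/Kminus - p₀^2) :
    p₀^2 + 2*e₀ - 1 < 0 := by
  have hpow : Kminus^(n-1) * (1-e₀)^2 ≤ (1-e₀)^2 :=
    mul_le_of_le_one_left (sq_nonneg _) (pow_le_one₀ hK0.le hK1.le)
  have hdiv : e₀^2 ≤ e₀^2 / Kminus := le_div_self (sq_nonneg _) hK0 hK1.le
  have key : e₀^2 + p₀^2 < (1-e₀)^2 := by linarith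
  linear_combination key

/-- For `0 < K₋ < 1`, the relativistic sufficient condition
`K₋^(n-1)(1-e₀)² - e₀²/K₋ - p₀² > 0` implies the non-relativistic criterion
`p₀² + 2e₀ - 1 < 0`. -/
theorem stmt14 (Kminus e₀ p₀ : ℝ) (n : ℕ) (hn : 1 ≤ n)
    (hK0 : 0 < Kminus) (hK1 : Kminus < 1)
    (h : 0 < Kminus^(n-1)*(1-e₀)^2 - e₀^2/Kminus - p₀^2) :
    p₀^2 + 2*e₀ - 1 < 0 :=
  stmt14_general Kminus e₀ p₀ n hK0 hK1 h
end

section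
/- Blow-up propagation along the logarithmic identity: suppose (p, e) solves the Riccati system p' = -e - p²K, e' = (1-e)pK along a characteristic with 0 < C₁ ≤ K(θ) ≤ 1, and suppose e(θ) remains < 1 and e(θ) → -∞ as θ → θ*⁻. Then d/dθ ln(1-e) = -pK, hence ln(1-e(θ)) - ln(1-e(σ)) = -∫_σ^θ pK dt, and e(θ) → -∞ forces ∫_σ^θ pK dt → -∞ as θ → θ*⁻, so liminf p = -∞. -/
/-- Blow-up propagation: if `(p, e)` solves the Riccati system
`p' = -e - Kp²`, `e' = (1-e)Kp` on `[0, θ*)` with `0 < C₁ ≤ K ≤ 1` and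
`e < 1` throughout, and `e(θ) → -∞` as `θ → θ*⁻`, then
`liminf p = -∞`, i.e. `p` is frequently below any bound near `θ*`. -/
theorem stmt17 (K p e : ℝ → ℝ) (C₁ θs : ℝ) (hθ : 0 < θs)
    (hK : Continuous K) (hC₁ : 0 < C₁)
    (hKb : ∀ θ ∈ Set.Ico 0 θs, C₁ ≤ K θ ∧ K θ ≤ 1)
    (hp : ∀ θ ∈ Set.Ico 0 θs, HasDerivAt p (-(e θ) - K θ * (p θ)^2) θ)
    (he : ∀ θ ∈ Set.Ico 0 θs, HasDerivAt e ((1 - e θ) * K θ * p θ) θ)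
    (helt : ∀ θ ∈ Set.Ico 0 θs, e θ < 1)
    (hblow : Filter.Tendsto e (nhdsWithin θs (Set.Iio θs)) Filter.atBot) :
    ∀ M : ℝ, ∃ᶠ θ in nhdsWithin θs (Set.Iio θs), p θ < M := by
  intro M
  set m : ℝ := min M 0 - 1 with hm
  have hmM : m < M := by
    have : min M 0 ≤ M := min_le_left _ _
    linarith
  have hmneg : m < 0 := by
    have : min M 0 ≤ 0 := min_le_right _ _
    linarith
  have key : ∃ᶠ θ in nhdsWithin θs (Set.Iio θs), p θ < m := by
    by_contra h
    rw [Filter.not_frequently] at h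
    have h' : ∀ᶠ θ in nhdsWithin θs (Set.Iio θs), m ≤ p θ :=
      h.mono fun θ hθ' => not_lt.1 hθ'
    obtain ⟨a, haθ, haI⟩ := mem_nhdsLT_iff_exists_Ioo_subset.1 h'
    rw [Set.mem_Iio] at haθ
    set a₀ : ℝ := max a 0 with ha₀
    have ha₀θ : a₀ < θs := max_lt haθ hθ
    set σ : ℝ := (a₀ + θs) / 2 with hσ
    have hσ1 : a₀ < σ := by rw [hσ]; linarith
    have hσ2 : σ < θs := by rw [hσ]; linarith
    have hσ0 : 0 ≤ σ := by
      have : (0:ℝ) ≤ a₀ := le_max_right _ _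
      linarith
    -- facts on Ioo a₀ θs
    have hmem : ∀ θ ∈ Set.Ioo a₀ θs, θ ∈ Set.Ico 0 θs ∧ m ≤ p θ := by
      intro θ hθ'
      have h0 : (0:ℝ) ≤ θ := le_of_lt (lt_of_le_of_lt (le_max_right a 0) hθ'.1)
      have ha' : a < θ := lt_of_le_of_lt (le_max_left a 0) hθ'.1
      exact ⟨⟨h0, hθ'.2⟩, haI ⟨ha', hθ'.2⟩⟩
    set g : ℝ → ℝ := fun t => (e t - 1) * Real.exp (m * t) with hg
    have hgd : ∀ θ ∈ Set.Ioo a₀ θs,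
        HasDerivAt g (((1 - e θ) * K θ * p θ) * Real.exp (m * θ)
          + (e θ - 1) * (Real.exp (m * θ) * m)) θ := by
      intro θ hθ'
      obtain ⟨hIco, _⟩ := hmem θ hθ'
      have h1 : HasDerivAt (fun t : ℝ => m * t) m θ := by
        simpa using (hasDerivAt_id θ).const_mul m
      exact ((he θ hIco).sub_const 1).mul h1.exp
    have hgd0 : ∀ θ ∈ Set.Ioo a₀ θs,
        0 ≤ ((1 - e θ) * K θ * p θ) * Real.exp (m * θ)
          + (e θ - 1) * (Real.exp (m * θ) * m) := by
      intro θ hθ'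
      obtain ⟨hIco, hmp⟩ := hmem θ hθ'
      have hKθ := hKb θ hIco
      have heθ := helt θ hIco
      have hexp : 0 < Real.exp (m * θ) := Real.exp_pos _
      have hKp : m ≤ K θ * p θ := by
        rcases le_or_gt 0 (p θ) with hp0 | hp0
        · nlinarith [hKθ.1]
        · nlinarith [hKθ.2]
      have hring : (1 - e θ) * K θ * p θ * Real.exp (m * θ)
          + (e θ - 1) * (Real.exp (m * θ) * m)
          = Real.exp (m * θ) * ((1 - e θ) * (K θ * p θ - m)) := by ring
      rw [hring]
      exact mul_nonneg hexp.le
        (mul_nonneg (by linarith) (by linarith))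
    -- g is monotone on [σ, θ] for θ < θs
    have hmono : ∀ θ ∈ Set.Ico σ θs, g σ ≤ g θ := by
      intro θ hθ'
      rcases eq_or_lt_of_le hθ'.1 with hEq | hlt
      · rw [hEq]
      have hsub : Set.Icc σ θ ⊆ Set.Ioo a₀ θs := fun x hx =>
        ⟨lt_of_lt_of_le hσ1 hx.1, lt_of_le_of_lt hx.2 hθ'.2⟩
      have hintsub : interior (Set.Icc σ θ) ⊆ Set.Ioo a₀ θs := by
        rw [interior_Icc]; exact fun x hx => hsub (Set.Ioo_subset_Icc_self hx)
      have hcont : ContinuousOn g (Set.Icc σ θ) := fun x hx =>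
        ((hgd x (hsub hx)).continuousAt).continuousWithinAt
      have hdiff : DifferentiableOn ℝ g (interior (Set.Icc σ θ)) := fun x hx =>
        ((hgd x (hintsub hx)).differentiableAt).differentiableWithinAt
      have hderiv : ∀ x ∈ interior (Set.Icc σ θ), 0 ≤ deriv g x := by
        intro x hx
        rw [(hgd x (hintsub hx)).deriv]
        exact hgd0 x (hintsub hx)
      exact monotoneOn_of_deriv_nonneg (convex_Icc σ θ)
        hcont hdiff hderiv (Set.left_mem_Icc.2 hθ'.1)
        (Set.right_mem_Icc.2 hθ'.1) hθ'.1
    -- lower bound for e on [σ, θs)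
    set L : ℝ := 1 + (e σ - 1) * Real.exp (-m * θs) with hL
    have hlow : ∀ θ ∈ Set.Ico σ θs, L ≤ e θ := by
      intro θ hθ'
      have hgm := hmono θ hθ'
      have hexpσ : 0 < Real.exp (m * σ) := Real.exp_pos _
      have hexpθ : 0 < Real.exp (m * θ) := Real.exp_pos _
      have heσ : e σ < 1 := helt σ ⟨hσ0, hσ2⟩
      -- (e θ - 1) ≥ (e σ - 1) * exp (m σ - m θ)
      have hgm' : (e σ - 1) * Real.exp (m * σ) ≤ (e θ - 1) * Real.exp (m * θ) := hgm
      have h1 : (e σ - 1) * Real.exp (m * σ - m * θ) ≤ e θ - 1 := by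
        rw [Real.exp_sub, mul_div_assoc', div_le_iff₀ hexpθ]
        exact hgm'
      have h2 : Real.exp (m * σ - m * θ) ≤ Real.exp (-m * θs) := by
        apply Real.exp_le_exp.2
        nlinarith [hθ'.1, hθ'.2, hσ0]
      have h3 : (e σ - 1) * Real.exp (-m * θs) ≤ (e σ - 1) * Real.exp (m * σ - m * θ) := by
        apply mul_le_mul_of_nonpos_left h2 (by linarith)
      rw [hL]; linarith
    -- contradiction with blow-up
    have hev1 : ∀ᶠ θ in nhdsWithin θs (Set.Iio θs), e θ < L :=
      hblow.eventually (Filter.eventually_lt_atBot L)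
    have hev2 : ∀ᶠ θ in nhdsWithin θs (Set.Iio θs), θ ∈ Set.Ioo σ θs :=
      Ioo_mem_nhdsLT_of_mem ⟨hσ2, le_refl _⟩
    obtain ⟨θ, h1, h2⟩ := (hev1.and hev2).exists
    exact absurd (hlow θ ⟨le_of_lt h2.1, h2.2⟩) (not_le.2 h1)
  exact key.mono fun θ hθ' => hθ'.trans hmM
end
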